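/- arXiv:1106.1230 — 5 statements merged into one kernel-verified Lean document; each statement's English description precedes it below -/
import Mathlib

section
/- Let O be an occurrence net and e, e' events with e # e'. Then there exists a maximal configuration of O that contains e but does not contain e'. -/
open scoped Classical

/-- A Petri net over places `P` and transitions `T`, with markings as functions `P → ℕ`
and the flow relation given by presets and postsets of transitions. -/
structure PetriNet (P : Type*) (T : Type*) where
  /-- `pre t p` means `p ∈ •t`, i.e. `(p,t)` is in the flow relation. -/
  pre : T → P → Prop
  /-- `post t p` means `p ∈ t•`, i.e. `(t,p)` is in the flow relation. -/
  post : T → P → Prop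
  /-- the initial marking -/
  M0 : P → ℕ

namespace PetriNet

variable {P : Type*} {T : Type*}

/-- A transition is enabled at a marking if every place of its preset is marked. -/
def enabled (N : PetriNet P T) (M : P → ℕ) (t : T) : Prop :=
  ∀ p, N.pre t p → 1 ≤ M p

/-- Firing a transition consumes a token from each place of the preset and
produces a token on each place of the postset. -/
noncomputable def fire (N : PetriNet P T) (M : P → ℕ) (t : T) : P → ℕ :=
  fun p => M p - (if N.pre t p then 1 else 0) + (if N.post t p then 1 else 0)

/-- `FireSeq N M l M'` : the finite sequence `l` of transitions can be fired from `M`,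
leading to `M'`. -/
inductive FireSeq (N : PetriNet P T) : (P → ℕ) → List T → (P → ℕ) → Prop
  | nil (M : P → ℕ) : FireSeq N M [] M
  | cons {M M' : P → ℕ} {t : T} {l : List T} :
      N.enabled M t → FireSeq N (N.fire M t) l M' → FireSeq N M (t :: l) M'

/-- A marking is reachable if some finite firing sequence from `M0` reaches it. -/
def Reachable (N : PetriNet P T) (M : P → ℕ) : Prop :=
  ∃ l : List T, FireSeq N N.M0 l M

/-- A net is safe if no reachable marking puts more than one token into any place. -/
def Safe (N : PetriNet P T) : Prop :=
  ∀ M, N.Reachable M → ∀ p, M p ≤ 1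

/-- A (finite or infinite) run of a Petri net: a firing sequence from the initial
marking.  `len = ⊤` means the run is infinite; for finite runs only the indices
`i < len` carry transitions. -/
structure Run (N : PetriNet P T) where
  /-- length of the run (`⊤` = infinite) -/
  len : ℕ∞
  /-- the transition fired at step `i` (meaningful for `i < len`) -/
  seq : ℕ → T
  /-- the marking before step `i` -/
  marks : ℕ → (P → ℕ)
  init : marks 0 = N.M0
  enabled_step : ∀ i : ℕ, (i : ℕ∞) < len → N.enabled (marks i) (seq i)
  fire_step : ∀ i : ℕ, (i : ℕ∞) < len → marks (i + 1) = N.fire (marks i) (seq i)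

/-- A transition occurs in a run if it is fired at some step of the run. -/
def Run.occurs {N : PetriNet P T} (σ : N.Run) (t : T) : Prop :=
  ∃ i : ℕ, (i : ℕ∞) < σ.len ∧ σ.seq i = t

/-- A run is fair iff it is finite and ends in a marking enabling no transition, or
it is infinite and no transition remains enabled from some point on while being
fired only finitely often thereafter. -/
def Run.Fair {N : PetriNet P T} (σ : N.Run) : Prop :=
  (∃ n : ℕ, σ.len = (n : ℕ∞) ∧ ∀ t, ¬ N.enabled (σ.marks n) t) ∨
  (σ.len = ⊤ ∧ ¬ ∃ (t : T) (i : ℕ),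
      (∀ k, i ≤ k → N.enabled (σ.marks k) t) ∧ (∀ k, i ≤ k → σ.seq k ≠ t))

section OccurrenceNet

variable {C : Type*} {E : Type*}

/-- The flow relation, as a relation on nodes (conditions `C` and events `E`). -/
def flow (O : PetriNet C E) : (C ⊕ E) → (C ⊕ E) → Prop
  | Sum.inl c, Sum.inr e => O.pre e c
  | Sum.inr e, Sum.inl c => O.post e c
  | _, _ => False

/-- Causality `<` on nodes: the transitive closure of the flow relation. -/
def nlt (O : PetriNet C E) : (C ⊕ E) → (C ⊕ E) → Prop :=
  Relation.TransGen O.flow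

/-- `≤` on nodes: the reflexive-transitive closure of the flow relation. -/
def nle (O : PetriNet C E) : (C ⊕ E) → (C ⊕ E) → Prop :=
  Relation.ReflTransGen O.flow

/-- Conflict `x # x'` between two nodes. -/
def Conflict (O : PetriNet C E) (x x' : C ⊕ E) : Prop :=
  ∃ e e' : E, e ≠ e' ∧ (∃ c : C, O.pre e c ∧ O.pre e' c) ∧
    O.nle (Sum.inr e) x ∧ O.nle (Sum.inr e') x'

/-- Causality `<` restricted to events. -/
def elt (O : PetriNet C E) (e e' : E) : Prop :=
  O.nlt (Sum.inr e) (Sum.inr e')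

/-- `≤` restricted to events. -/
def ele (O : PetriNet C E) (e e' : E) : Prop :=
  e = e' ∨ O.elt e e'

/-- Conflict restricted to events. -/
def econflict (O : PetriNet C E) (e e' : E) : Prop :=
  O.Conflict (Sum.inr e) (Sum.inr e')

/-- The cone `⌈e⌉` of an event: all events `e' ≤ e`. -/
def cone (O : PetriNet C E) (e : E) : Set E :=
  {e' | O.ele e' e}

/-- `O` is an occurrence net. -/
structure IsOccurrenceNet (O : PetriNet C E) : Prop where
  /-- no self-conflict -/
  no_self_conflict : ∀ x : C ⊕ E, ¬ O.Conflict x x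
  /-- `<` is acyclic -/
  acyclic : ∀ x : C ⊕ E, ¬ O.nlt x x
  /-- all cones are finite -/
  finite_cones : ∀ e : E, (O.cone e).Finite
  /-- no backward branching: `|•c| ≤ 1` -/
  no_backward_branching : ∀ (c : C) (e e' : E), O.post e c → O.post e' c → e = e'
  /-- the initial marking `C0` is exactly the set of `≤`-minimal conditions -/
  init_minimal : ∀ c : C, O.M0 c = (if ∀ e : E, ¬ O.post e c then 1 else 0)
  /-- no event is `≤`-minimal (the minimal nodes are conditions) -/
  events_not_minimal : ∀ e : E, ∃ c : C, O.pre e c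

/-- A configuration: a downward-closed, conflict-free set of events. -/
def IsConfiguration (O : PetriNet C E) (𝒞 : Set E) : Prop :=
  (∀ e ∈ 𝒞, ∀ e' : E, O.elt e' e → e' ∈ 𝒞) ∧
  (∀ e ∈ 𝒞, ∀ e' ∈ 𝒞, ¬ O.econflict e e')

/-- The cut of a configuration: `(C0 ∪ 𝒞•) \ •𝒞`. -/
def Cut (O : PetriNet C E) (𝒞 : Set E) : Set C :=
  {c | (1 ≤ O.M0 c ∨ ∃ e ∈ 𝒞, O.post e c) ∧ ¬ ∃ e ∈ 𝒞, O.pre e c}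

/-- A maximal configuration (w.r.t. set inclusion). -/
def MaximalConfiguration (O : PetriNet C E) (𝒞 : Set E) : Prop :=
  O.IsConfiguration 𝒞 ∧ ∀ 𝒟 : Set E, O.IsConfiguration 𝒟 → 𝒞 ⊆ 𝒟 → 𝒟 = 𝒞

/-- `e` reveals `e'` (`e ▷ e'`): every fair run containing `e` also contains `e'`. -/
def Reveals (O : PetriNet C E) (e e' : E) : Prop :=
  ∀ σ : O.Run, σ.Fair → σ.occurs e → σ.occurs e'

/-- Direct causal predecessor relation among events: `e ∈ •(•e')`. -/
def dpred (O : PetriNet C E) (e e' : E) : Prop :=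
  ∃ c : C, O.post e c ∧ O.pre e' c

/-- The height `H(e) = 1 + max { H(e') : e' ∈ •(•e) }` (with `max ∅ = 0`), expressed
as the maximal number of events on a chain of direct causal predecessors ending in `e`. -/
noncomputable def height (O : PetriNet C E) (e : E) : ℕ :=
  sSup {n : ℕ | 1 ≤ n ∧ ∃ f : ℕ → E, f (n - 1) = e ∧
    ∀ i : ℕ, i + 1 < n → O.dpred (f i) (f (i + 1))}

/-- The height of a prefix, given by its set of events: the maximal height of an event. -/
noncomputable def prefixHeight (O : PetriNet C E) (Es : Set E) : ℕ :=
  sSup (O.height '' Es)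

/-- Two conditions are concurrent iff some configuration has both in its cut. -/
def concurrentC (O : PetriNet C E) (c c' : C) : Prop :=
  ∃ 𝒞 : Set E, O.IsConfiguration 𝒞 ∧ c ∈ O.Cut 𝒞 ∧ c' ∈ O.Cut 𝒞

/-- A co-set: a set of pairwise concurrent conditions. -/
def CoSet (O : PetriNet C E) (D : Set C) : Prop :=
  ∀ c ∈ D, ∀ c' ∈ D, c ≠ c' → O.concurrentC c c'

end OccurrenceNet

end PetriNet

/-- An unfolding of the safe Petri net `N`: an occurrence net (with conditions `C` and
events `E`) together with a folding map (given by `fC` on conditions and `fE` on events)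
satisfying the usual properties. -/
structure Unfolding {P T : Type*} (C E : Type*) (N : PetriNet P T) where
  /-- the underlying occurrence net -/
  net : PetriNet C E
  occ : net.IsOccurrenceNet
  /-- the folding map on conditions -/
  fC : C → P
  /-- the folding map on events -/
  fE : E → T
  /-- `f` restricts to a bijection from `C0` to `M0` -/
  init_maps : ∀ c, 1 ≤ net.M0 c → 1 ≤ N.M0 (fC c)
  init_inj : ∀ c c', 1 ≤ net.M0 c → 1 ≤ net.M0 c' → fC c = fC c' → c = c'
  init_surj : ∀ p, 1 ≤ N.M0 p → ∃ c, 1 ≤ net.M0 c ∧ fC c = p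
  /-- for every co-set `D` and transition `t` such that `f` is a bijection from `D`
  to `•t`, there is exactly one event `e` with `f e = t` and `•e = D` -/
  coset_event : ∀ (D : Set C) (t : T), net.CoSet D →
      (∀ c ∈ D, N.pre t (fC c)) → Set.InjOn fC D →
      (∀ p, N.pre t p → ∃ c ∈ D, fC c = p) →
      ∃! e : E, fE e = t ∧ ∀ c, net.pre e c ↔ c ∈ D
  /-- `f` restricts to a bijection from `•e` to `•(f e)` -/
  pre_maps : ∀ e c, net.pre e c → N.pre (fE e) (fC c)
  pre_inj : ∀ e c c', net.pre e c → net.pre e c' → fC c = fC c' → c = c'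
  pre_surj : ∀ e p, N.pre (fE e) p → ∃ c, net.pre e c ∧ fC c = p
  /-- `f` restricts to a bijection from `e•` to `(f e)•` -/
  post_maps : ∀ e c, net.post e c → N.post (fE e) (fC c)
  post_inj : ∀ e c c', net.post e c → net.post e c' → fC c = fC c' → c = c'
  post_surj : ∀ e p, N.post (fE e) p → ∃ c, net.post e c ∧ fC c = p

namespace Unfolding

variable {P T C E : Type*} {N : PetriNet P T}

/-- The marking (as a set of places) associated with a configuration:
`Mark(𝒞) = f(Cut(𝒞))`. -/
def Mark (V : Unfolding C E N) (𝒞 : Set E) : Set P :=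
  V.fC '' V.net.Cut 𝒞

/-- The marking associated with a configuration, as a function `P → ℕ`. -/
noncomputable def MarkFun (V : Unfolding C E N) (𝒞 : Set E) : P → ℕ :=
  (V.Mark 𝒞).indicator fun _ => 1

/-- `M_e := Mark(⌈e⌉)`. -/
def Me (V : Unfolding C E N) (e : E) : Set P :=
  V.Mark (V.net.cone e)

/-- The level-`i` cutoffs `L_i` (with `L_0 = ∅`):
`e ∈ L_1` iff `M_e = M_0` or some `e' < e` has `M_{e'} = M_e`;
for `i > 1`, `e ∈ L_i` iff some `e' ∈ L_{i-1}` has `e' < e` and `M_{e'} = M_e`. -/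
def levelCut (V : Unfolding C E N) : ℕ → Set E
  | 0 => ∅
  | 1 => {e | V.Me e = {p | 1 ≤ N.M0 p} ∨ ∃ e', V.net.elt e' e ∧ V.Me e' = V.Me e}
  | (i + 2) => {e | ∃ e' ∈ V.levelCut (i + 1), V.net.elt e' e ∧ V.Me e' = V.Me e}

/-- The events of the level-`i` prefix `U_i`: the downward closure of the
`≤`-minimal events of `L_i`. -/
def levelEvents (V : Unfolding C E N) (i : ℕ) : Set E :=
  {e | ∃ e', (e' ∈ V.levelCut i ∧ ∀ e'' ∈ V.levelCut i, ¬ V.net.elt e'' e') ∧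
    V.net.ele e e'}

end Unfolding

/-- Let `O` be an occurrence net and `e, e'` events with `e # e'`.
Then there exists a maximal configuration of `O` that contains `e` but not `e'`. -/
theorem stmt9 {C E : Type} (O : PetriNet C E) (hO : O.IsOccurrenceNet)
    (e e' : E) (h : O.econflict e e') :
    ∃ 𝒞 : Set E, O.MaximalConfiguration 𝒞 ∧ e ∈ 𝒞 ∧ e' ∉ 𝒞 := by
  classical
  -- helper: ele gives nle on nodes
  have ele_nle : ∀ a b : E, O.ele a b → O.nle (Sum.inr a) (Sum.inr b) := by
    rintro a b (rfl | hab)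
    · exact Relation.ReflTransGen.refl
    · exact hab.to_reflTransGen
  -- a configuration containing e and e' would contradict e # e'
  have key : ∀ 𝒞 : Set E, O.IsConfiguration 𝒞 → e ∈ 𝒞 → e' ∉ 𝒞 := by
    intro 𝒞 h𝒞 he he'
    obtain ⟨g, g', hne, hc, hge, hge'⟩ := h
    have hg : g ∈ 𝒞 := by
      rcases (Relation.reflTransGen_iff_eq_or_transGen.mp hge) with heq | hlt
      · exact (Sum.inr.inj heq) ▸ he
      · exact h𝒞.1 e he g hlt
    have hg' : g' ∈ 𝒞 := by
      rcases (Relation.reflTransGen_iff_eq_or_transGen.mp hge') with heq | hlt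
      · exact (Sum.inr.inj heq) ▸ he'
      · exact h𝒞.1 e' he' g' hlt
    exact h𝒞.2 g hg g' hg' ⟨g, g', hne, hc, Relation.ReflTransGen.refl,
      Relation.ReflTransGen.refl⟩
  -- the cone of e is a configuration containing e
  have hcone : O.IsConfiguration (O.cone e) := by
    constructor
    · rintro a (rfl | ha) b hb
      · exact Or.inr hb
      · exact Or.inr (hb.trans ha)
    · intro a ha b hb hab
      obtain ⟨g, g', hne, hc, hga, hgb⟩ := hab
      exact hO.no_self_conflict (Sum.inr e)
        ⟨g, g', hne, hc, hga.trans (ele_nle a e ha), hgb.trans (ele_nle b e hb)⟩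
  -- Zorn on configurations containing e
  obtain ⟨m, hsub, hm⟩ := zorn_subset_nonempty
    {𝒞 : Set E | O.IsConfiguration 𝒞 ∧ e ∈ 𝒞}
    (by
      intro c hc hchain hne
      refine ⟨⋃₀ c, ⟨⟨?_, ?_⟩, ?_⟩, fun s hs => Set.subset_sUnion_of_mem hs⟩
      · rintro a ⟨s, hs, has⟩ b hba
        exact ⟨s, hs, (hc hs).1.1 a has b hba⟩
      · rintro a ⟨s, hs, has⟩ b ⟨t, ht, hbt⟩ hab
        rcases hchain.total hs ht with hst | hts
        · exact (hc ht).1.2 a (hst has) b hbt hab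
        · exact (hc hs).1.2 a has b (hts hbt) hab
      · obtain ⟨s, hs⟩ := hne
        exact ⟨s, hs, (hc hs).2⟩)
    (O.cone e) ⟨hcone, Or.inl rfl⟩
  refine ⟨m, ⟨hm.prop.1, ?_⟩, hm.prop.2, key m hm.prop.1 hm.prop.2⟩
  intro 𝒟 h𝒟 hm𝒟
  exact le_antisymm (hm.2 ⟨h𝒟, hm𝒟 hm.prop.2⟩ hm𝒟) hm𝒟
end

section
/- Let O be an occurrence net, viewed as a safe Petri net with initial marking C0, and let 𝒞 be a finite set of events. Then 𝒞 is a configuration of O if and only if the elements of 𝒞 can be arranged into a sequence e_1, …, e_n that is a firing sequence of O starting from C0; moreover, for a finite configuration 𝒞 any such firing sequence leads from C0 to the marking Cut(𝒞). -/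
open scoped Classical

/-! Adding an event `t ∉ 𝒞` to a configuration `𝒞` yields a configuration exactly when
`•t ⊆ Cut 𝒞`, and firing `t` at the marking `Cut 𝒞` then yields `Cut (insert t 𝒞)`.
Induction along a firing sequence gives the backward direction together with the reached
marking; for the forward direction, remove a `<`-maximal event and recurse. -/

theorem List.setOf_mem_append_singleton {α : Type*} (l : List α) (a : α) :
    {x | x ∈ l ++ [a]} = insert a {x | x ∈ l} := by
  ext x
  simp [or_comm]

namespace PetriNet

section FireSeq

variable {P T : Type*} {N : PetriNet P T}

theorem enabled_indicator_iff {s : Set P} {t : T} :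
    N.enabled (s.indicator fun _ => 1) t ↔ ∀ p, N.pre t p → p ∈ s := by
  refine forall₂_congr fun p _ => ?_
  by_cases hp : p ∈ s <;> simp [hp]

theorem FireSeq.append_singleton_iff {M M'' : P → ℕ} {l : List T} {t : T} :
    N.FireSeq M (l ++ [t]) M'' ↔
      ∃ M', N.FireSeq M l M' ∧ N.enabled M' t ∧ M'' = N.fire M' t := by
  induction l generalizing M with
  | nil =>
    constructor
    · rintro (_ | ⟨ht, (_ | _)⟩)
      exact ⟨M, .nil M, ht, rfl⟩
    · rintro ⟨M', (_ | _), ht, rfl⟩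
      exact .cons ht (.nil _)
  | cons a l ih =>
    constructor
    · rintro (_ | ⟨ha, h⟩)
      obtain ⟨M', h', ht, rfl⟩ := ih.1 h
      exact ⟨M', .cons ha h', ht, rfl⟩
    · rintro ⟨M', (_ | ⟨ha, h⟩), ht, rfl⟩
      exact .cons ha (ih.2 ⟨M', h, ht, rfl⟩)

end FireSeq

section OccurrenceNet

variable {C E : Type*} {O : PetriNet C E}

theorem elt_of_post_of_pre {e e' : E} {c : C} (h : O.post e c) (h' : O.pre e' c) :
    O.elt e e' :=
  .tail (.single (show O.flow (.inr e) (.inl c) from h)) h'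

theorem ele_of_nle {e e' : E} (h : O.nle (.inr e) (.inr e')) : O.ele e e' := by
  rcases Relation.reflTransGen_iff_eq_or_transGen.mp h with h | h
  · exact .inl (Sum.inr_injective h).symm
  · exact .inr h

theorem exists_pre_post_of_elt {e e' : E} (h : O.elt e e') :
    ∃ c e'', O.pre e' c ∧ O.post e'' c ∧ O.ele e e'' := by
  obtain ⟨c | _, hec, hc⟩ := Relation.TransGen.tail'_iff.mp h
  · rcases hec.cases_tail with hec | ⟨_ | e'', he, hpost⟩
    · cases hec
    · exact hpost.elim
    · exact ⟨c, e'', hc, hpost, ele_of_nle he⟩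
  · exact hc.elim

theorem isConfiguration_iff {𝒞 : Set E} :
    O.IsConfiguration 𝒞 ↔ (∀ e ∈ 𝒞, ∀ e', O.elt e' e → e' ∈ 𝒞) ∧
      ∀ e ∈ 𝒞, ∀ e' ∈ 𝒞, ∀ c, O.pre e c → O.pre e' c → e = e' := by
  refine ⟨fun h => ⟨h.1, fun e he e' he' c hc hc' => ?_⟩, fun ⟨hdown, hpre⟩ => ⟨hdown, ?_⟩⟩
  · by_contra hne
    exact h.2 e he e' he' ⟨e, e', hne, ⟨c, hc, hc'⟩, .refl, .refl⟩
  · have hmem : ∀ {e a}, a ∈ 𝒞 → O.nle (.inr e) (.inr a) → e ∈ 𝒞 := fun ha hle => by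
      rcases ele_of_nle hle with rfl | hlt
      exacts [ha, hdown _ ha _ hlt]
    rintro a ha b hb ⟨e, e', hne, ⟨c, hc, hc'⟩, hea, he'b⟩
    exact hne (hpre e (hmem ha hea) e' (hmem hb he'b) c hc hc')

namespace IsConfiguration

variable {𝒞 : Set E}

theorem mem_of_ele (h : O.IsConfiguration 𝒞) {e e' : E} (he : e ∈ 𝒞) (h' : O.ele e' e) :
    e' ∈ 𝒞 := by
  rcases h' with rfl | h'
  exacts [he, h.1 e he e' h']

theorem eq_of_pre (h : O.IsConfiguration 𝒞) {e e' : E} {c : C} (he : e ∈ 𝒞) (he' : e' ∈ 𝒞)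
    (hc : O.pre e c) (hc' : O.pre e' c) : e = e' :=
  (isConfiguration_iff.mp h).2 e he e' he' c hc hc'

theorem diff_singleton (h : O.IsConfiguration 𝒞) {e : E} (hmax : ∀ e' ∈ 𝒞, ¬ O.elt e e') :
    O.IsConfiguration (𝒞 \ {e}) :=
  ⟨fun a ha b hb => ⟨h.1 a ha.1 b hb, by rintro rfl; exact hmax a ha.1 hb⟩,
    fun a ha b hb => h.2 a ha.1 b hb.1⟩

end IsConfiguration

namespace IsOccurrenceNet

variable (hO : O.IsOccurrenceNet)
include hO

theorem one_le_M0_iff (c : C) : 1 ≤ O.M0 c ↔ ∀ e, ¬ O.post e c := by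
  rw [hO.init_minimal c]
  split_ifs with h <;> simp [h]

theorem indicator_cut_empty : (O.Cut ∅).indicator (fun _ => 1) = O.M0 := by
  funext c
  have := hO.init_minimal c
  by_cases h : ∀ e, ¬ O.post e c <;> simp_all [Cut]

theorem not_elt_of_ele {e e' : E} (h : O.ele e e') : ¬ O.elt e' e := by
  rcases h with rfl | h
  exacts [hO.acyclic _, fun h' => hO.acyclic _ (h.trans h')]

/-- An event with a `⊆`-maximal cone is `<`-maximal. -/
theorem exists_maximal {𝒞 : Set E} (hfin : 𝒞.Finite) (hne : 𝒞.Nonempty) :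
    ∃ e ∈ 𝒞, ∀ e' ∈ 𝒞, ¬ O.elt e e' := by
  obtain ⟨e, he, hmax⟩ := hfin.exists_maximalFor O.cone 𝒞 hne
  refine ⟨e, he, fun e' he' hlt => hO.not_elt_of_ele ?_ hlt⟩
  have hcone : O.cone e ⊆ O.cone e' := by
    rintro x (rfl | hx)
    exacts [.inr hlt, .inr (hx.trans hlt)]
  exact hmax he' hcone (.inl rfl)

theorem pre_subset_cut_of_insert {𝒞 : Set E} {t : E} (h : O.IsConfiguration (insert t 𝒞))
    (ht : t ∉ 𝒞) {c : C} (hc : O.pre t c) : c ∈ O.Cut 𝒞 := by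
  refine ⟨?_, fun ⟨e, he, hec⟩ => ht ?_⟩
  · by_cases hinit : ∀ e, ¬ O.post e c
    · exact .inl ((hO.one_le_M0_iff c).2 hinit)
    · push Not at hinit
      obtain ⟨e, he⟩ := hinit
      have hlt := elt_of_post_of_pre he hc
      rcases h.1 t (Set.mem_insert _ _) e hlt with rfl | he𝒞
      exacts [(hO.acyclic _ hlt).elim, .inr ⟨e, he𝒞, he⟩]
  · rwa [h.eq_of_pre (Set.mem_insert _ _) (Set.mem_insert_of_mem _ he) hc hec]

theorem insert_of_pre_subset_cut {𝒞 : Set E} {t : E} (h : O.IsConfiguration 𝒞)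
    (hcut : ∀ c, O.pre t c → c ∈ O.Cut 𝒞) : O.IsConfiguration (insert t 𝒞) := by
  have hpred : ∀ e, O.elt e t → e ∈ 𝒞 := by
    intro e hlt
    obtain ⟨c, e', hc, hpost, hle⟩ := exists_pre_post_of_elt hlt
    obtain ⟨hinit | ⟨e'', he'', hpost'⟩, -⟩ := hcut c hc
    · exact ((hO.one_le_M0_iff c).1 hinit e' hpost).elim
    · exact h.mem_of_ele (hO.no_backward_branching c e'' e' hpost' hpost ▸ he'') hle
  refine isConfiguration_iff.mpr ⟨?_, ?_⟩
  · rintro a (rfl | ha) e hlt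
    exacts [.inr (hpred e hlt), .inr (h.1 a ha e hlt)]
  · rintro a (rfl | ha) b (rfl | hb) c hca hcb
    · rfl
    · exact ((hcut c hca).2 ⟨b, hb, hcb⟩).elim
    · exact ((hcut c hcb).2 ⟨a, ha, hca⟩).elim
    · exact h.eq_of_pre ha hb hca hcb

theorem fire_indicator_cut {𝒞 : Set E} {t : E} (h : O.IsConfiguration 𝒞) (ht : t ∉ 𝒞)
    (hcut : ∀ c, O.pre t c → c ∈ O.Cut 𝒞) :
    O.fire ((O.Cut 𝒞).indicator fun _ => 1) t = (O.Cut (insert t 𝒞)).indicator fun _ => 1 := by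
  funext c
  by_cases hpre : O.pre t c
  · have hpost : ¬ O.post t c := fun hpost => hO.acyclic _ (elt_of_post_of_pre hpost hpre)
    have hnot_cut : c ∉ O.Cut (insert t 𝒞) := fun hc => hc.2 ⟨t, Set.mem_insert _ _, hpre⟩
    simp [fire, hpre, hpost, hcut c hpre, hnot_cut]
  by_cases hpost : O.post t c
  · have hnot_cut : c ∉ O.Cut 𝒞 := by
      rintro ⟨hinit | ⟨e, he, hec⟩, -⟩
      · exact (hO.one_le_M0_iff c).1 hinit t hpost
      · exact ht (hO.no_backward_branching c e t hec hpost ▸ he)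
    have hmem : c ∈ O.Cut (insert t 𝒞) := by
      refine ⟨.inr ⟨t, Set.mem_insert _ _, hpost⟩, ?_⟩
      rintro ⟨e, rfl | he, hec⟩
      exacts [hpre hec, ht (h.1 e he t (elt_of_post_of_pre hpost hec))]
    simp [fire, hpre, hpost, hnot_cut, hmem]
  · have hmem : c ∈ O.Cut (insert t 𝒞) ↔ c ∈ O.Cut 𝒞 := by simp [Cut, hpre, hpost]
    simp [fire, Set.indicator_apply, hpre, hpost, hmem]

theorem isConfiguration_and_eq_cut_of_fireSeq {l : List E} {M : C → ℕ}
    (hl : l.Nodup) (h : O.FireSeq O.M0 l M) :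
    O.IsConfiguration {e | e ∈ l} ∧ M = (O.Cut {e | e ∈ l}).indicator fun _ => 1 := by
  induction l using List.reverseRecOn generalizing M with
  | nil =>
    cases h
    exact ⟨by simp [IsConfiguration], by simp [hO.indicator_cut_empty]⟩
  | append_singleton l t ih =>
    obtain ⟨M', h', ht, rfl⟩ := FireSeq.append_singleton_iff.mp h
    rw [List.nodup_append] at hl
    have htl : t ∉ l := fun htl => hl.2.2 t htl t (List.mem_singleton_self t) rfl
    obtain ⟨hconf, rfl⟩ := ih hl.1 h'
    have hcut := enabled_indicator_iff.mp ht
    rw [List.setOf_mem_append_singleton]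
    exact ⟨hO.insert_of_pre_subset_cut hconf hcut, hO.fire_indicator_cut hconf htl hcut⟩

theorem exists_fireSeq_of_isConfiguration {𝒞 : Set E} (hfin : 𝒞.Finite)
    (h : O.IsConfiguration 𝒞) :
    ∃ (l : List E) (M : C → ℕ), l.Nodup ∧ {e | e ∈ l} = 𝒞 ∧ O.FireSeq O.M0 l M := by
  rcases 𝒞.eq_empty_or_nonempty with rfl | hne
  · exact ⟨[], O.M0, .nil, by simp, .nil _⟩
  obtain ⟨e, he, hmax⟩ := hO.exists_maximal hfin hne
  obtain ⟨l, M, hl, hset, hfs⟩ :=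
    exists_fireSeq_of_isConfiguration hfin.sdiff (h.diff_singleton hmax)
  have hel : e ∉ l := fun hel => (hset ▸ hel : e ∈ 𝒞 \ {e}).2 rfl
  have hcut : ∀ c, O.pre e c → c ∈ O.Cut (𝒞 \ {e}) :=
    fun c => hO.pre_subset_cut_of_insert (by rwa [Set.insert_sdiff_singleton,
      Set.insert_eq_of_mem he]) (fun he' => he'.2 rfl)
  obtain ⟨-, rfl⟩ := hO.isConfiguration_and_eq_cut_of_fireSeq hl hfs
  refine ⟨l ++ [e], _, ?_, ?_, FireSeq.append_singleton_iff.mpr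
    ⟨_, hfs, enabled_indicator_iff.mpr (hset ▸ hcut), rfl⟩⟩
  · simpa using (List.nodup_concat l e).mpr ⟨hel, hl⟩
  · rw [List.setOf_mem_append_singleton, hset, Set.insert_sdiff_singleton,
      Set.insert_eq_of_mem he]
termination_by 𝒞.ncard
decreasing_by exact Set.ncard_sdiff_singleton_lt_of_mem he hfin

end IsOccurrenceNet

end OccurrenceNet

end PetriNet

/-- Let `O` be an occurrence net, viewed as a safe Petri net with
initial marking `C0`, and let `𝒞` be a finite set of events.  Then `𝒞` is a
configuration of `O` if and only if the elements of `𝒞` can be arranged into a sequence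
`e_1, …, e_n` that is a firing sequence of `O` starting from `C0`; moreover, for a finite
configuration `𝒞` any such firing sequence leads from `C0` to the marking `Cut(𝒞)`. -/
theorem stmt14 {C E : Type} (O : PetriNet C E) (hO : O.IsOccurrenceNet)
    (𝒞 : Set E) (hfin : 𝒞.Finite) :
    (O.IsConfiguration 𝒞 ↔
      ∃ (l : List E) (M : C → ℕ),
        l.Nodup ∧ {e | e ∈ l} = 𝒞 ∧ O.FireSeq O.M0 l M) ∧
    (O.IsConfiguration 𝒞 →
      ∀ (l : List E) (M : C → ℕ),
        l.Nodup → {e | e ∈ l} = 𝒞 → O.FireSeq O.M0 l M →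
        M = (O.Cut 𝒞).indicator fun _ => 1) := by
  refine ⟨⟨hO.exists_fireSeq_of_isConfiguration hfin, ?_⟩, ?_⟩
  · rintro ⟨l, M, hl, rfl, hfs⟩
    exact (hO.isConfiguration_and_eq_cut_of_fireSeq hl hfs).1
  · rintro - l M hl rfl hfs
    exact (hO.isConfiguration_and_eq_cut_of_fireSeq hl hfs).2
end

section
/- Let N be a safe Petri net with unfolding U and folding map f. A marking M is reachable in N if and only if there exists a finite configuration 𝒞 of U such that Mark(𝒞) = M. -/
open scoped Classical

section Aux

open PetriNet Relation

variable {P T C E : Type*}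

lemma fireSeq_append {N : PetriNet P T} {M M' : P → ℕ} {l : List T}
    (h : PetriNet.FireSeq N M l M') {t : T} (ht : N.enabled M' t) :
    PetriNet.FireSeq N M (l ++ [t]) (N.fire M' t) := by
  induction h with
  | nil M => exact .cons ht (.nil _)
  | cons he _ ih => exact .cons he (ih ht)

variable {O : PetriNet C E}

lemma nlt_event_dest {x : C ⊕ E} {e : E} (h : O.nlt x (Sum.inr e)) :
    ∃ c : C, O.pre e c ∧ Relation.ReflTransGen O.flow x (Sum.inl c) := by
  rcases (Relation.TransGen.tail'_iff).1 h with ⟨y, hy, hflow⟩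
  cases y with
  | inl c => exact ⟨c, hflow, hy⟩
  | inr e' => exact hflow.elim

lemma nlt_cond_dest {x : C ⊕ E} {c : C} (h : O.nlt x (Sum.inl c)) :
    ∃ e : E, O.post e c ∧ Relation.ReflTransGen O.flow x (Sum.inr e) := by
  rcases (Relation.TransGen.tail'_iff).1 h with ⟨y, hy, hflow⟩
  cases y with
  | inl c' => exact hflow.elim
  | inr e' => exact ⟨e', hflow, hy⟩

lemma elt_of_post_pre {e e' : E} {c : C} (h1 : O.post e c) (h2 : O.pre e' c) :
    O.elt e e' :=
  Relation.TransGen.head (show O.flow (Sum.inr e) (Sum.inl c) from h1)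
    (Relation.TransGen.single (show O.flow (Sum.inl c) (Sum.inr e') from h2))

/-- every strict causal ancestor of `e` lies in `𝒞` provided `•e ⊆ Cut 𝒞`. -/
lemma mem_of_elt_of_preCut (hO : O.IsOccurrenceNet) {𝒞 : Set E}
    (h𝒞 : O.IsConfiguration 𝒞) {e : E} (hpre : ∀ c, O.pre e c → c ∈ O.Cut 𝒞)
    {b : E} (hb : O.elt b e) : b ∈ 𝒞 := by
  obtain ⟨c, hc, hbc⟩ := nlt_event_dest hb
  have hcut := hpre c hc
  rcases (Relation.reflTransGen_iff_eq_or_transGen).1 hbc with heq | htg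
  · exact absurd heq (by simp)
  obtain ⟨e', hpost, hbe'⟩ := nlt_cond_dest htg
  -- c has a producer, so M0 c = 0, so the Cut clause gives a producer in 𝒞
  have hM0 : O.M0 c = 0 := by
    rw [hO.init_minimal c, if_neg]
    push_neg
    exact ⟨e', hpost⟩
  obtain ⟨e₀, he₀, hpost₀⟩ : ∃ e₀ ∈ 𝒞, O.post e₀ c := by
    rcases hcut.1 with h | h
    · omega
    · exact h
  have he' : e' ∈ 𝒞 := hO.no_backward_branching c e' e₀ hpost hpost₀ ▸ he₀
  rcases (Relation.reflTransGen_iff_eq_or_transGen).1 hbe' with heq | htg'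
  · exact (Sum.inr_injective heq.symm : b = e') ▸ he'
  · exact h𝒞.1 e' he' b htg'

lemma step_config (hO : O.IsOccurrenceNet) {𝒞 : Set E}
    (h𝒞 : O.IsConfiguration 𝒞) {e : E}
    (hpre : ∀ c, O.pre e c → c ∈ O.Cut 𝒞) (he : e ∉ 𝒞) :
    O.IsConfiguration (insert e 𝒞) := by
  have key : ∀ z ∈ insert e 𝒞, ∀ w : E,
      O.nle (Sum.inr w) (Sum.inr z) → w ∈ insert e 𝒞 := by
    intro z hz w hw
    rcases (Relation.reflTransGen_iff_eq_or_transGen).1 hw with heq | htg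
    · exact (Sum.inr_injective heq.symm : w = z) ▸ hz
    rcases hz with rfl | hz
    · exact Or.inr (mem_of_elt_of_preCut hO h𝒞 hpre htg)
    · exact Or.inr (h𝒞.1 z hz w htg)
  constructor
  · intro a ha b hb
    rcases ha with rfl | ha
    · exact Or.inr (mem_of_elt_of_preCut hO h𝒞 hpre hb)
    · exact Or.inr (h𝒞.1 a ha b hb)
  · intro a ha b hb hc
    obtain ⟨u, u', huu, ⟨c, hu, hu'⟩, hua, hub⟩ := hc
    have hum : u ∈ insert e 𝒞 := key a ha u hua
    have hum' : u' ∈ insert e 𝒞 := key b hb u' hub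
    rcases hum with rfl | hum <;> rcases hum' with h' | hum'
    · exact huu h'.symm
    · -- u = e, u' ∈ 𝒞 : u' consumes c ∈ Cut 𝒞
      exact (hpre c hu).2 ⟨u', hum', hu'⟩
    · subst h'
      exact (hpre c hu').2 ⟨u, hum, hu⟩
    · exact h𝒞.2 u hum u' hum'
        ⟨u, u', huu, ⟨c, hu, hu'⟩, Relation.ReflTransGen.refl, Relation.ReflTransGen.refl⟩

lemma step_cut (hO : O.IsOccurrenceNet) {𝒞 : Set E}
    (h𝒞 : O.IsConfiguration 𝒞) {e : E}
    (hpre : ∀ c, O.pre e c → c ∈ O.Cut 𝒞) (he : e ∉ 𝒞) :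
    O.Cut (insert e 𝒞) = {c | (c ∈ O.Cut 𝒞 ∧ ¬ O.pre e c) ∨ O.post e c} := by
  ext c
  constructor
  · rintro ⟨h1, h2⟩
    by_cases hp : O.post e c
    · exact Or.inr hp
    left
    refine ⟨⟨?_, ?_⟩, ?_⟩
    · rcases h1 with h | ⟨e', he', hpost⟩
      · exact Or.inl h
      · rcases he' with rfl | he'
        · exact absurd hpost hp
        · exact Or.inr ⟨e', he', hpost⟩
    · rintro ⟨e', he', hpe⟩
      exact h2 ⟨e', Or.inr he', hpe⟩
    · intro hpe
      exact h2 ⟨e, Or.inl rfl, hpe⟩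
  · rintro (⟨⟨hc1, hc2⟩, hnp⟩ | hp)
    · refine ⟨?_, ?_⟩
      · rcases hc1 with h | ⟨e', he', hpost⟩
        · exact Or.inl h
        · exact Or.inr ⟨e', Or.inr he', hpost⟩
      · rintro ⟨e', he', hpe⟩
        rcases he' with rfl | he'
        · exact hnp hpe
        · exact hc2 ⟨e', he', hpe⟩
    · refine ⟨Or.inr ⟨e, Or.inl rfl, hp⟩, ?_⟩
      rintro ⟨e', he', hpe⟩
      rcases he' with rfl | he'
      · exact hO.acyclic (Sum.inr e') (elt_of_post_pre hp hpe)
      · exact he (h𝒞.1 e' he' e (elt_of_post_pre hp hpe))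

end Aux

section Aux2

open PetriNet

variable {P T C E : Type*} {N : PetriNet P T}

lemma markFun_apply (V : Unfolding C E N) (𝒞 : Set E) (p : P) :
    V.MarkFun 𝒞 p = if p ∈ V.Mark 𝒞 then 1 else 0 :=
  Set.indicator_apply _ _ _

/-- The main step lemma: extending a configuration by one event whose preset lies in
the cut corresponds to firing the corresponding transition. -/
lemma step_main (hsafe : N.Safe) (V : Unfolding C E N) {𝒞 : Set E}
    (h𝒞 : V.net.IsConfiguration 𝒞)
    (hinj : Set.InjOn V.fC (V.net.Cut 𝒞))
    (hreach : N.Reachable (V.MarkFun 𝒞))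
    {e : E} (hpre : ∀ c, V.net.pre e c → c ∈ V.net.Cut 𝒞) (he : e ∉ 𝒞) :
    N.enabled (V.MarkFun 𝒞) (V.fE e) ∧
    V.MarkFun (insert e 𝒞) = N.fire (V.MarkFun 𝒞) (V.fE e) ∧
    Set.InjOn V.fC (V.net.Cut (insert e 𝒞)) := by
  set t := V.fE e with ht
  set M := V.MarkFun 𝒞 with hM
  -- membership in the old marking
  have memM : ∀ p, 1 ≤ M p ↔ ∃ c ∈ V.net.Cut 𝒞, V.fC c = p := by
    intro p
    rw [hM, markFun_apply]
    constructor
    · intro h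
      by_cases hp : p ∈ V.Mark 𝒞
      · exact hp
      · simp [hp] at h
    · intro h
      have hp : p ∈ V.Mark 𝒞 := by
        obtain ⟨c, hc, rfl⟩ := h
        exact ⟨c, hc, rfl⟩
      simp [hp]
  have hMle : ∀ p, M p ≤ 1 := by
    intro p; rw [hM, markFun_apply]; split <;> omega
  -- enabledness
  have henab : N.enabled M t := by
    intro p hp
    obtain ⟨c, hc, hfc⟩ := V.pre_surj e p hp
    exact (memM p).2 ⟨c, hpre c hc, hfc⟩
  -- the new marking is reachable, hence safe
  obtain ⟨l, hl⟩ := hreach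
  have hreach' : N.Reachable (N.fire M t) := ⟨l ++ [t], fireSeq_append hl henab⟩
  have hsafe' : ∀ p, N.fire M t p ≤ 1 := hsafe _ hreach'
  -- for conditions of the cut, pre e c ↔ pre t (fC c)
  have pret_iff : ∀ c ∈ V.net.Cut 𝒞, (N.pre t (V.fC c) ↔ V.net.pre e c) := by
    intro c hc
    constructor
    · intro hp
      obtain ⟨c₂, hc₂, hfc₂⟩ := V.pre_surj e _ hp
      exact (hinj hc (hpre c₂ hc₂) hfc₂.symm) ▸ hc₂
    · intro hp
      exact V.pre_maps e c hp
  have hcut := step_cut V.occ h𝒞 hpre he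
  -- membership in the new marking
  have memM' : ∀ p, p ∈ V.Mark (insert e 𝒞) ↔
      ∃ c, ((c ∈ V.net.Cut 𝒞 ∧ ¬ V.net.pre e c) ∨ V.net.post e c) ∧ V.fC c = p := by
    intro p
    constructor
    · rintro ⟨c, hc, rfl⟩
      rw [hcut] at hc
      exact ⟨c, hc, rfl⟩
    · rintro ⟨c, hc, rfl⟩
      refine ⟨c, ?_, rfl⟩
      rw [hcut]
      exact hc
  have hfire : ∀ p, N.fire M t p = M p - (if N.pre t p then 1 else 0)
      + (if N.post t p then 1 else 0) := fun _ => rfl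
  refine ⟨henab, ?_, ?_⟩
  · -- the new marking function equals the fired marking
    funext p
    rw [markFun_apply]
    by_cases hpost : N.post t p
    · -- p ∈ t•
      have h1 : p ∈ V.Mark (insert e 𝒞) := by
        obtain ⟨c, hc, hfc⟩ := V.post_surj e p hpost
        exact (memM' p).2 ⟨c, Or.inr hc, hfc⟩
      rw [if_pos h1]
      have h2 : 1 ≤ N.fire M t p := by
        rw [hfire, if_pos hpost]; omega
      have := hsafe' p
      omega
    · by_cases hpret : N.pre t p
      · -- p ∈ •t \ t• : new value 0
        have hMp : M p = 1 := le_antisymm (hMle p) (henab p hpret)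
        have h1 : p ∉ V.Mark (insert e 𝒞) := by
          rw [memM']
          rintro ⟨c, hc, rfl⟩
          rcases hc with ⟨hc, hnp⟩ | hc
          · exact hnp ((pret_iff c hc).1 hpret)
          · exact hpost (V.post_maps e c hc)
        rw [if_neg h1, hfire, if_pos hpret, if_neg hpost, hMp]
      · -- p untouched
        have h1 : p ∈ V.Mark (insert e 𝒞) ↔ 1 ≤ M p := by
          rw [memM', memM]
          constructor
          · rintro ⟨c, hc, rfl⟩
            rcases hc with ⟨hc, _⟩ | hc
            · exact ⟨c, hc, rfl⟩
            · exact absurd (V.post_maps e c hc) hpost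
          · rintro ⟨c, hc, rfl⟩
            exact ⟨c, Or.inl ⟨hc, fun hp => hpret (V.pre_maps e c hp)⟩, rfl⟩
        rw [hfire, if_neg hpret, if_neg hpost]
        have := hMle p
        by_cases h2 : p ∈ V.Mark (insert e 𝒞)
        · rw [if_pos h2]; have := h1.1 h2; omega
        · rw [if_neg h2]
          rcases Nat.eq_zero_or_pos (M p) with h | h
          · omega
          · exact absurd (h1.2 h) h2
  · -- injectivity on the new cut
    intro c hc c' hc' hfc
    rw [hcut] at hc hc'
    have mixed : ∀ c₁ c₂ : C, (c₁ ∈ V.net.Cut 𝒞 ∧ ¬ V.net.pre e c₁) →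
        V.net.post e c₂ → V.fC c₁ = V.fC c₂ → False := by
      rintro c₁ c₂ ⟨hc₁, hnp⟩ hc₂ hfe
      set p := V.fC c₁ with hp
      have hpost : N.post t p := hfe ▸ V.post_maps e c₂ hc₂
      have hpret : ¬ N.pre t p := fun h => hnp ((pret_iff c₁ hc₁).1 h)
      have hMp : 1 ≤ M p := (memM p).2 ⟨c₁, hc₁, rfl⟩
      have := hsafe' p
      rw [hfire, if_neg hpret, if_pos hpost] at this
      omega
    rcases hc with ⟨hc, hnp⟩ | hc <;> rcases hc' with ⟨hc', hnp'⟩ | hc'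
    · exact hinj hc hc' hfc
    · exact absurd hfc (fun h => mixed c c' ⟨hc, hnp⟩ hc' h)
    · exact absurd hfc.symm (fun h => mixed c' c ⟨hc', hnp'⟩ hc h)
    · exact V.post_inj e c c' hc hc' hfc

end Aux2

section Aux3

open PetriNet

variable {P T C E : Type*} {N : PetriNet P T}

/-- Properties of the empty configuration. -/
lemma init_props (hsafe : N.Safe) (V : Unfolding C E N) :
    V.net.IsConfiguration (∅ : Set E) ∧ Set.InjOn V.fC (V.net.Cut (∅ : Set E)) ∧
    V.MarkFun (∅ : Set E) = N.M0 := by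
  have hcut : V.net.Cut (∅ : Set E) = {c | 1 ≤ V.net.M0 c} := by
    ext c
    simp [PetriNet.Cut]
  refine ⟨⟨by simp, by simp⟩, ?_, ?_⟩
  · intro c hc c' hc' hfc
    rw [hcut] at hc hc'
    exact V.init_inj c c' hc hc' hfc
  · have hM0 : ∀ p, N.M0 p ≤ 1 := hsafe N.M0 ⟨[], .nil _⟩
    funext p
    rw [markFun_apply]
    have hmem : p ∈ V.Mark (∅ : Set E) ↔ 1 ≤ N.M0 p := by
      constructor
      · rintro ⟨c, hc, rfl⟩
        rw [hcut] at hc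
        exact V.init_maps c hc
      · intro h
        obtain ⟨c, hc, hfc⟩ := V.init_surj p h
        exact ⟨c, hcut ▸ hc, hfc⟩
    by_cases h : p ∈ V.Mark (∅ : Set E)
    · rw [if_pos h]
      have := hmem.1 h
      have := hM0 p
      omega
    · rw [if_neg h]
      rcases Nat.eq_zero_or_pos (N.M0 p) with h' | h'
      · omega
      · exact absurd (hmem.2 h') h
  
/-- A finite nonempty set of events has a `<`-maximal element. -/
lemma exists_maximal {O : PetriNet C E} (hO : O.IsOccurrenceNet) :
    ∀ n : ℕ, ∀ 𝒞 : Set E, 𝒞.Finite → 𝒞.Nonempty → 𝒞.ncard ≤ n →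
      ∃ e ∈ 𝒞, ∀ e' ∈ 𝒞, ¬ O.elt e e' := by
  intro n
  induction n with
  | zero =>
    intro 𝒞 hfin hne hcard
    have := (Set.ncard_pos hfin).2 hne
    omega
  | succ n ih =>
    intro 𝒞 hfin hne hcard
    obtain ⟨e, he⟩ := hne
    by_cases hmax : ∀ e' ∈ 𝒞, ¬ O.elt e e'
    · exact ⟨e, he, hmax⟩
    · push_neg at hmax
      obtain ⟨e', he', hlt⟩ := hmax
      set 𝒟 := {x ∈ 𝒞 | O.elt e x} with h𝒟
      have hsub : 𝒟 ⊆ 𝒞 := fun x hx => hx.1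
      have hne' : 𝒟.Nonempty := ⟨e', he', hlt⟩
      have hemem : e ∉ 𝒟 := fun hx => hO.acyclic _ hx.2
      have hlt' : 𝒟.ncard < 𝒞.ncard :=
        Set.ncard_lt_ncard ⟨hsub, fun h => hemem (h he)⟩ hfin
      obtain ⟨x, hx, hxmax⟩ := ih 𝒟 (hfin.subset hsub) hne' (by omega)
      refine ⟨x, hx.1, fun y hy hxy => hxmax y ⟨hy, Relation.TransGen.trans hx.2 hxy⟩ hxy⟩

/-- Forward direction invariant. -/
def Good (V : Unfolding C E N) (M : P → ℕ) : Prop :=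
  ∃ 𝒞 : Set E, V.net.IsConfiguration 𝒞 ∧ 𝒞.Finite ∧
    Set.InjOn V.fC (V.net.Cut 𝒞) ∧ V.MarkFun 𝒞 = M

lemma forward_step (hsafe : N.Safe) (V : Unfolding C E N) {M : P → ℕ} {t : T}
    (hG : Good V M) (hreach : N.Reachable M) (henab : N.enabled M t) :
    Good V (N.fire M t) := by
  obtain ⟨𝒞, h𝒞, hfin, hinj, hMk⟩ := hG
  subst hMk
  set D := {c | c ∈ V.net.Cut 𝒞 ∧ N.pre t (V.fC c)} with hD
  have hDsub : D ⊆ V.net.Cut 𝒞 := fun c hc => hc.1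
  obtain ⟨e, ⟨hfe, hepre⟩, _⟩ := V.coset_event D t
    (fun c hc c' hc' _ => ⟨𝒞, h𝒞, hc.1, hc'.1⟩)
    (fun c hc => hc.2)
    (hinj.mono hDsub)
    (by
      intro p hp
      have h1 : 1 ≤ V.MarkFun 𝒞 p := henab p hp
      rw [markFun_apply] at h1
      by_cases h2 : p ∈ V.Mark 𝒞
      · obtain ⟨c, hc, rfl⟩ := h2
        exact ⟨c, ⟨hc, hp⟩, rfl⟩
      · simp [h2] at h1)
  have hpre : ∀ c, V.net.pre e c → c ∈ V.net.Cut 𝒞 := fun c hc => ((hepre c).1 hc).1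
  have he : e ∉ 𝒞 := by
    intro hmem
    obtain ⟨c, hc⟩ := V.occ.events_not_minimal e
    exact (hpre c hc).2 ⟨e, hmem, hc⟩
  obtain ⟨_, hmark, hinj'⟩ := step_main hsafe V h𝒞 hinj hreach hpre he
  exact ⟨insert e 𝒞, step_config V.occ h𝒞 hpre he, hfin.insert e, hinj', hfe ▸ hmark⟩

lemma forward (hsafe : N.Safe) (V : Unfolding C E N) {M M' : P → ℕ} {l : List T}
    (h : PetriNet.FireSeq N M l M') (hG : Good V M) (hreach : N.Reachable M) :
    Good V M' := by
  induction h with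
  | nil M => exact hG
  | @cons M M' t l henab hseq ih =>
    refine ih (forward_step hsafe V hG hreach henab) ?_
    obtain ⟨l₀, hl₀⟩ := hreach
    exact ⟨l₀ ++ [t], fireSeq_append hl₀ henab⟩

lemma backward (hsafe : N.Safe) (V : Unfolding C E N) :
    ∀ n : ℕ, ∀ 𝒞 : Set E, V.net.IsConfiguration 𝒞 → 𝒞.Finite → 𝒞.ncard ≤ n →
      N.Reachable (V.MarkFun 𝒞) ∧ Set.InjOn V.fC (V.net.Cut 𝒞) := by
  intro n
  induction n with
  | zero =>
    intro 𝒞 h𝒞 hfin hcard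
    have h0 : 𝒞 = ∅ := by
      rcases Set.eq_empty_or_nonempty 𝒞 with h | h
      · exact h
      · have := (Set.ncard_pos hfin).2 h
        omega
    subst h0
    obtain ⟨_, hinj, hMk⟩ := init_props hsafe V
    exact ⟨hMk ▸ ⟨[], .nil _⟩, hinj⟩
  | succ n ih =>
    intro 𝒞 h𝒞 hfin hcard
    rcases Set.eq_empty_or_nonempty 𝒞 with h | hne
    · subst h
      obtain ⟨_, hinj, hMk⟩ := init_props hsafe V
      exact ⟨hMk ▸ ⟨[], .nil _⟩, hinj⟩
    obtain ⟨e, he, hemax⟩ := exists_maximal V.occ (n + 1) 𝒞 hfin hne hcard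
    set 𝒞₀ := 𝒞 \ {e} with h𝒞₀
    have hins : insert e 𝒞₀ = 𝒞 := by
      rw [h𝒞₀, Set.insert_diff_singleton, Set.insert_eq_self.2 he]
    have hconf₀ : V.net.IsConfiguration 𝒞₀ := by
      constructor
      · intro a ha b hb
        have hbmem : b ∈ 𝒞 := h𝒞.1 a ha.1 b hb
        refine ⟨hbmem, ?_⟩
        rintro rfl
        exact hemax a ha.1 hb
      · intro a ha b hb
        exact h𝒞.2 a ha.1 b hb.1
    have hcard₀ : 𝒞₀.ncard ≤ n := by
      have h := Set.ncard_diff_singleton_lt_of_mem he hfin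
      rw [← h𝒞₀] at h
      omega
    obtain ⟨hreach₀, hinj₀⟩ := ih 𝒞₀ hconf₀ (hfin.subset Set.diff_subset) hcard₀
    have hpre : ∀ c, V.net.pre e c → c ∈ V.net.Cut 𝒞₀ := by
      intro c hc
      constructor
      · by_cases hprod : ∃ e'', V.net.post e'' c
        · obtain ⟨e'', hpost⟩ := hprod
          have helt : V.net.elt e'' e := elt_of_post_pre hpost hc
          have he'' : e'' ∈ 𝒞 := h𝒞.1 e he e'' helt
          refine Or.inr ⟨e'', ⟨he'', ?_⟩, hpost⟩
          rintro rfl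
          exact V.occ.acyclic _ helt
        · push_neg at hprod
          left
          rw [V.occ.init_minimal c, if_pos hprod]
      · rintro ⟨e'', he'', hpe⟩
        have hne'' : e'' ≠ e := he''.2
        exact h𝒞.2 e'' he''.1 e he
          ⟨e'', e, hne'', ⟨c, hpe, hc⟩, Relation.ReflTransGen.refl, Relation.ReflTransGen.refl⟩
    have hemem₀ : e ∉ 𝒞₀ := fun h => h.2 rfl
    obtain ⟨henab, hmark, hinj'⟩ := step_main hsafe V hconf₀ hinj₀ hreach₀ hpre hemem₀
    rw [hins] at hmark hinj'
    refine ⟨?_, hinj'⟩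
    obtain ⟨l₀, hl₀⟩ := hreach₀
    rw [hmark]
    exact ⟨l₀ ++ [V.fE e], fireSeq_append hl₀ henab⟩

end Aux3

/-- Let `N` be a safe Petri net with unfolding `U` and folding map `f`.
A marking `M` is reachable in `N` if and only if there exists a finite configuration `𝒞`
of `U` such that `Mark(𝒞) = M`. -/
theorem stmt15 {P T C E : Type} (N : PetriNet P T) (hsafe : N.Safe)
    (V : Unfolding C E N) (M : P → ℕ) :
    N.Reachable M ↔
      ∃ 𝒞 : Set E, V.net.IsConfiguration 𝒞 ∧ 𝒞.Finite ∧ V.MarkFun 𝒞 = M := by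
  constructor
  · rintro ⟨l, hl⟩
    have hG0 : Good V N.M0 := by
      obtain ⟨hconf, hinj, hMk⟩ := init_props hsafe V
      exact ⟨∅, hconf, Set.finite_empty, hinj, hMk⟩
    obtain ⟨𝒞, hconf, hfin, _, hMk⟩ := forward hsafe V hl hG0 ⟨[], .nil _⟩
    exact ⟨𝒞, hconf, hfin, hMk⟩
  · rintro ⟨𝒞, hconf, hfin, rfl⟩
    exact (backward hsafe V 𝒞.ncard 𝒞 hconf hfin le_rfl).1
end

section
/- Let O be an occurrence net and x, y, z, u events such that: ¬(x # y); witness(x,y,z) holds (z # y and ¬(z # x)) and z is minimal with this property (no z' < z satisfies witness(x,y,z')); u ≤ y, u # z, and u is minimal with this property (no u' < u satisfies u' # z). Then the set 𝒞^{uxz} := (⌈u⌉ ∖ {u}) ∪ ⌈x⌉ ∪ (⌈z⌉ ∖ {z}) is a configuration of O. -/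
open scoped Classical

section Helpers

variable {C E : Type} {O : PetriNet C E}

lemma ele_refl (e : E) : O.ele e e := Or.inl rfl

lemma ele_nle {a b : E} (h : O.ele a b) :
    O.nle (Sum.inr a) (Sum.inr b) := by
  rcases h with rfl | h
  · exact Relation.ReflTransGen.refl
  · exact h.to_reflTransGen

lemma ele_trans {a b c : E} (h : O.ele a b) (h' : O.ele b c) : O.ele a c := by
  rcases h with rfl | h
  · exact h'
  · rcases h' with rfl | h'
    · exact Or.inr h
    · exact Or.inr (h.trans h')

lemma econflict_symm {a b : E} (h : O.econflict a b) : O.econflict b a := by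
  obtain ⟨e, e', hne, ⟨c, h1, h2⟩, ha, hb⟩ := h
  exact ⟨e', e, hne.symm, ⟨c, h2, h1⟩, hb, ha⟩

lemma econflict_mono {a b a' b' : E} (h : O.econflict a b)
    (ha : O.ele a a') (hb : O.ele b b') : O.econflict a' b' := by
  obtain ⟨e, e', hne, hc, h1, h2⟩ := h
  exact ⟨e, e', hne, hc, h1.trans (ele_nle ha), h2.trans (ele_nle hb)⟩

end Helpers

/-- Let `O` be an occurrence net and `x, y, z, u` events such that:
`¬(x # y)`; `witness(x,y,z)` holds (`z # y` and `¬(z # x)`) and `z` is minimal with this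
property (no `z' < z` satisfies `witness(x,y,z')`); `u ≤ y`, `u # z`, and `u` is minimal
with this property (no `u' < u` satisfies `u' # z`).  Then the set
`𝒞^{uxz} := (⌈u⌉ ∖ {u}) ∪ ⌈x⌉ ∪ (⌈z⌉ ∖ {z})` is a configuration of `O`. -/
theorem stmt17 {C E : Type} (O : PetriNet C E) (hO : O.IsOccurrenceNet)
    (x y z u : E)
    (hxy : ¬ O.econflict x y)
    (hzy : O.econflict z y) (hzx : ¬ O.econflict z x)
    (hzmin : ∀ z', O.elt z' z → ¬ (O.econflict z' y ∧ ¬ O.econflict z' x))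
    (huy : O.ele u y) (huz : O.econflict u z)
    (humin : ∀ u', O.elt u' u → ¬ O.econflict u' z) :
    O.IsConfiguration ((O.cone u \ {u}) ∪ O.cone x ∪ (O.cone z \ {z})) := by
  constructor
  · -- downward closed
    rintro e ((⟨heu, hne⟩ | hex) | ⟨hez, hne⟩) e' hlt
    · -- e ∈ ⌈u⌉ \ {u}
      have heu' : O.elt e u := by
        rcases heu with rfl | h
        · exact absurd rfl hne
        · exact h
      have hlt' : O.elt e' u := hlt.trans heu'
      have hne' : e' ≠ u := by
        rintro rfl
        exact hO.acyclic _ hlt'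
      exact Or.inl (Or.inl ⟨Or.inr hlt', hne'⟩)
    · -- e ∈ ⌈x⌉
      exact Or.inl (Or.inr (ele_trans (Or.inr hlt) hex))
    · -- e ∈ ⌈z⌉ \ {z}
      have hez' : O.elt e z := by
        rcases hez with rfl | h
        · exact absurd rfl hne
        · exact h
      have hlt' : O.elt e' z := hlt.trans hez'
      have hne' : e' ≠ z := by
        rintro rfl
        exact hO.acyclic _ hlt'
      exact Or.inr ⟨Or.inr hlt', hne'⟩
  · -- conflict-free
    rintro e he e' he' hc
    have boundsU : ∀ {a : E}, a ∈ O.cone u \ {u} → O.elt a u := by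
      rintro a ⟨ha, hane⟩
      rcases ha with rfl | h
      · exact absurd rfl hane
      · exact h
    have boundsZ : ∀ {a : E}, a ∈ O.cone z \ {z} → O.ele a z := fun ha => ha.1
    rcases he with (hu | hx) | hz <;> rcases he' with (hu' | hx') | hz'
    · -- u, u
      exact hO.no_self_conflict _
        (econflict_mono hc (Or.inr (boundsU hu)) (Or.inr (boundsU hu')))
    · -- u, x : gives y # x
      exact hxy (econflict_symm
        (econflict_mono hc (ele_trans (Or.inr (boundsU hu)) huy) hx'))
    · -- u, z : e # z with e < u contradicts humin
      exact humin _ (boundsU hu) (econflict_mono hc (ele_refl _) (boundsZ hz'))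
    · -- x, u
      exact hxy (econflict_mono hc hx (ele_trans (Or.inr (boundsU hu')) huy))
    · -- x, x
      exact hO.no_self_conflict _ (econflict_mono hc hx hx')
    · -- x, z : gives x # z, so z # x
      exact hzx (econflict_symm (econflict_mono hc hx (boundsZ hz')))
    · -- z, u
      exact humin _ (boundsU hu')
        (econflict_mono (econflict_symm hc) (ele_refl _) (boundsZ hz))
    · -- z, x
      exact hzx (econflict_mono hc (boundsZ hz) hx')
    · -- z, z
      exact hO.no_self_conflict _ (econflict_mono hc (boundsZ hz) (boundsZ hz'))
end

section
/- Let O be an occurrence net, σ a run of O (viewed as a safe Petri net with initial marking C0), and 𝒞 the set of events occurring in σ. Then 𝒞 is a configuration of O, and σ is fair if and only if 𝒞 is a maximal configuration of O. -/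
open scoped Classical

/-! The marking reached after `m` steps of a run of an occurrence net is the cut of the set of
events fired so far, and that set is a configuration: firing an event `e` enabled at `Cut 𝒞`
turns the marking `Cut 𝒞` into `Cut (insert e 𝒞)`, and `insert e 𝒞` is again a configuration.
Hence the events of a run form a configuration `𝒞`, and the run is fair iff no event is enabled
at `Cut 𝒞`; for infinite runs this uses that the finitely many causal predecessors of an event
have all fired after finitely many steps. Independently of runs, a configuration `𝒞` is maximal
iff no event is enabled at `Cut 𝒞`: such an event extends `𝒞`, and conversely an `<`-minimal
event of `𝒟 \ 𝒞`, for a configuration `𝒟 ⊋ 𝒞`, is enabled at `Cut 𝒞`. -/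

namespace PetriNet

section OccurrenceNet

variable {C E : Type*} {O : PetriNet C E} {𝒞 : Set E}

def CutEnabled (O : PetriNet C E) (𝒞 : Set E) (e : E) : Prop :=
  ∀ c, O.pre e c → c ∈ O.Cut 𝒞

lemma one_le_M0_iff (hO : O.IsOccurrenceNet) {c : C} : 1 ≤ O.M0 c ↔ ∀ e, ¬ O.post e c := by
  rw [hO.init_minimal]
  split_ifs with h <;> simp [h]

lemma elt_of_dpred {f e : E} (h : O.dpred f e) : O.elt f e :=
  let ⟨c, hfc, hec⟩ := h
  .head (show O.flow (.inr f) (.inl c) from hfc) (.single (show O.flow (.inl c) (.inr e) from hec))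

lemma nle_inr_iff {a b : E} : O.nle (.inr a) (.inr b) ↔ O.ele a b := by
  rw [nle, Relation.reflTransGen_iff_eq_or_transGen, ele, elt, nlt, eq_comm, Sum.inr.injEq]

lemma elt_of_ele_of_elt {a b c : E} (hab : O.ele a b) (hbc : O.elt b c) : O.elt a c := by
  rcases hab with rfl | hab
  exacts [hbc, Relation.TransGen.trans hab hbc]

lemma exists_dpred_of_elt {b e : E} (h : O.elt b e) : ∃ f, O.dpred f e ∧ O.ele b f := by
  obtain ⟨z, hbz, hze⟩ := Relation.TransGen.tail'_iff.mp h
  rcases z with c | _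
  · rcases (Relation.ReflTransGen.cases_tail_iff _ _ _).mp hbz with h | ⟨z, hbz, hzc⟩
    · cases h
    · rcases z with _ | f
      · exact hzc.elim
      · exact ⟨f, ⟨c, hzc, hze⟩, nle_inr_iff.mp hbz⟩
  · exact hze.elim

lemma cone_ssubset_cone (hO : O.IsOccurrenceNet) {a b : E} (h : O.elt a b) :
    O.cone a ⊂ O.cone b := by
  refine (Set.ssubset_iff_of_subset fun x hx => Or.inr (elt_of_ele_of_elt hx h)).mpr
    ⟨b, Or.inl rfl, fun hba => hO.acyclic _ (elt_of_ele_of_elt hba h)⟩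

lemma wellFounded_elt (hO : O.IsOccurrenceNet) : WellFounded O.elt :=
  Subrelation.wf (fun h => Set.ncard_lt_ncard (cone_ssubset_cone hO h) (hO.finite_cones _))
    (InvImage.wf (fun e => (O.cone e).ncard) wellFounded_lt)

lemma IsConfiguration.eq_of_pre_s18 (h𝒞 : O.IsConfiguration 𝒞) {e e' : E} {c : C} (he : e ∈ 𝒞)
    (he' : e' ∈ 𝒞) (hc : O.pre e c) (hc' : O.pre e' c) : e = e' := by
  by_contra hne
  exact h𝒞.2 e he e' he' ⟨e, e', hne, ⟨c, hc, hc'⟩, .refl, .refl⟩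

lemma IsConfiguration.of_eq_of_pre (hdown : ∀ e ∈ 𝒞, ∀ e', O.elt e' e → e' ∈ 𝒞)
    (hpre : ∀ e ∈ 𝒞, ∀ e' ∈ 𝒞, ∀ c, O.pre e c → O.pre e' c → e = e') :
    O.IsConfiguration 𝒞 := by
  have hmem : ∀ {x y}, x ∈ 𝒞 → O.nle (.inr y) (.inr x) → y ∈ 𝒞 := fun hx hyx => by
    rcases nle_inr_iff.mp hyx with rfl | hlt
    exacts [hx, hdown _ hx _ hlt]
  exact ⟨hdown, fun x hx y hy ⟨g, g', hne, ⟨c, hg, hg'⟩, hgx, hgy⟩ =>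
    hne (hpre g (hmem hx hgx) g' (hmem hy hgy) c hg hg')⟩

lemma mem_of_post_of_mem_cut (hO : O.IsOccurrenceNet) {c : C} {f : E} (hc : c ∈ O.Cut 𝒞)
    (hf : O.post f c) : f ∈ 𝒞 := by
  rcases hc.1 with h0 | ⟨f', hf', hf'c⟩
  · exact absurd hf ((one_le_M0_iff hO).mp h0 f)
  · rwa [hO.no_backward_branching c f f' hf hf'c]

lemma CutEnabled.not_mem (hO : O.IsOccurrenceNet) {e : E} (he : O.CutEnabled 𝒞 e) : e ∉ 𝒞 :=
  fun he𝒞 =>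
    let ⟨c, hc⟩ := hO.events_not_minimal e
    (he c hc).2 ⟨e, he𝒞, hc⟩

lemma CutEnabled.of_subset {F : Set E} {e : E} (he : O.CutEnabled 𝒞 e) (hF : F ⊆ 𝒞)
    (hpast : ∀ f ∈ 𝒞, O.elt f e → f ∈ F) : O.CutEnabled F e := fun c hc =>
  ⟨(he c hc).1.imp_right fun ⟨f, hf, hfc⟩ => ⟨f, hpast f hf (elt_of_dpred ⟨c, hfc, hc⟩), hfc⟩,
    fun ⟨g, hg, hgc⟩ => (he c hc).2 ⟨g, hF hg, hgc⟩⟩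

lemma IsConfiguration.insert (hO : O.IsOccurrenceNet) (h𝒞 : O.IsConfiguration 𝒞) {e : E}
    (he : O.CutEnabled 𝒞 e) : O.IsConfiguration (insert e 𝒞) := by
  have hpast : ∀ b, O.elt b e → b ∈ 𝒞 := fun b hb => by
    obtain ⟨f, ⟨c, hfc, hec⟩, hbf⟩ := exists_dpred_of_elt hb
    have hf := mem_of_post_of_mem_cut hO (he c hec) hfc
    rcases hbf with rfl | hlt
    exacts [hf, h𝒞.1 f hf b hlt]
  have hfree : ∀ g ∈ 𝒞, ∀ c, O.pre g c → ¬ O.pre e c := fun g hg c hgc hec =>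
    (he c hec).2 ⟨g, hg, hgc⟩
  refine .of_eq_of_pre ?_ ?_
  · rintro x (rfl | hx) b hb
    exacts [Or.inr (hpast b hb), Or.inr (h𝒞.1 x hx b hb)]
  · rintro x (rfl | hx) y (rfl | hy) c hxc hyc
    · rfl
    · exact (hfree y hy c hyc hxc).elim
    · exact (hfree x hx c hxc hyc).elim
    · exact h𝒞.eq_of_pre_s18 hx hy hxc hyc

lemma indicator_cut_insert (hO : O.IsOccurrenceNet) (h𝒞 : O.IsConfiguration 𝒞) {e : E}
    (he : O.CutEnabled 𝒞 e) (c : C) :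
    (if c ∈ O.Cut (insert e 𝒞) then 1 else 0) =
      (if c ∈ O.Cut 𝒞 then 1 else 0) - (if O.pre e c then 1 else 0) +
        (if O.post e c then 1 else 0) := by
  by_cases hpre : O.pre e c
  · have hpost : ¬ O.post e c := fun hpost =>
      hO.acyclic (.inr e) (.head (show O.flow (.inr e) (.inl c) from hpost)
        (.single (show O.flow (.inl c) (.inr e) from hpre)))
    have hcut : c ∉ O.Cut (insert e 𝒞) := fun h => h.2 ⟨e, Set.mem_insert e 𝒞, hpre⟩
    simp [hpre, hpost, hcut, he c hpre]
  by_cases hpost : O.post e c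
  · have hcut : c ∉ O.Cut 𝒞 := fun h => he.not_mem hO (mem_of_post_of_mem_cut hO h hpost)
    have hcut' : c ∈ O.Cut (insert e 𝒞) := by
      refine ⟨Or.inr ⟨e, Set.mem_insert e 𝒞, hpost⟩, ?_⟩
      rintro ⟨g, rfl | hg, hgc⟩
      · exact hpre hgc
      · exact he.not_mem hO (h𝒞.1 g hg e (elt_of_dpred ⟨c, hpost, hgc⟩))
    simp [hpre, hpost, hcut, hcut']
  · have hcut : c ∈ O.Cut (insert e 𝒞) ↔ c ∈ O.Cut 𝒞 := by simp [Cut, hpre, hpost]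
    simp [hpre, hpost, hcut]

lemma exists_cutEnabled_of_ssubset (hO : O.IsOccurrenceNet) {𝒟 : Set E}
    (h𝒟 : O.IsConfiguration 𝒟) (hsub : 𝒞 ⊂ 𝒟) : ∃ e, O.CutEnabled 𝒞 e := by
  obtain ⟨e, ⟨he𝒟, he𝒞⟩, hmin⟩ := (wellFounded_elt hO).has_min _ (Set.nonempty_of_ssubset hsub)
  refine ⟨e, fun c hc => ⟨?_, ?_⟩⟩
  · by_cases hprod : ∃ f, O.post f c
    · obtain ⟨f, hf⟩ := hprod
      have hfe : O.elt f e := elt_of_dpred ⟨c, hf, hc⟩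
      exact Or.inr ⟨f, by_contra fun hf𝒞 => hmin f ⟨h𝒟.1 e he𝒟 f hfe, hf𝒞⟩ hfe, hf⟩
    · exact Or.inl ((one_le_M0_iff hO).mpr (not_exists.mp hprod))
  · rintro ⟨g, hg, hgc⟩
    exact he𝒞 (h𝒟.eq_of_pre_s18 (hsub.1 hg) he𝒟 hgc hc ▸ hg)

theorem maximalConfiguration_iff (hO : O.IsOccurrenceNet) (h𝒞 : O.IsConfiguration 𝒞) :
    O.MaximalConfiguration 𝒞 ↔ ∀ e, ¬ O.CutEnabled 𝒞 e := by
  refine ⟨fun hmax e he => he.not_mem hO ?_, fun h => ⟨h𝒞, fun 𝒟 h𝒟 hsub => ?_⟩⟩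
  · rw [← hmax.2 _ (h𝒞.insert hO he) (Set.subset_insert e 𝒞)]
    exact Set.mem_insert e 𝒞
  · by_contra hne
    obtain ⟨e, he⟩ := exists_cutEnabled_of_ssubset hO h𝒟 (hsub.ssubset_of_ne (Ne.symm hne))
    exact h e he

end OccurrenceNet

namespace Run

section Fired

variable {P T : Type*} {N : PetriNet P T} (σ : N.Run)

def firedBefore (m : ℕ) : Set T :=
  {t | ∃ k < m, σ.seq k = t}

lemma firedBefore_zero : σ.firedBefore 0 = ∅ := by
  simp [firedBefore]

lemma firedBefore_succ (m : ℕ) :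
    σ.firedBefore (m + 1) = insert (σ.seq m) (σ.firedBefore m) := by
  ext t
  simp only [firedBefore, Set.mem_ofPred_eq, Set.mem_insert_iff, Nat.lt_succ_iff_lt_or_eq,
    or_and_right, exists_or, exists_eq_left]
  exact or_comm.trans (or_congr_left eq_comm)

lemma firedBefore_mono : Monotone σ.firedBefore :=
  fun _ _ h _ ⟨k, hk, hkt⟩ => ⟨k, hk.trans_le h, hkt⟩

lemma occurs_of_mem_firedBefore {m : ℕ} (hm : (m : ℕ∞) ≤ σ.len) {t : T}
    (ht : t ∈ σ.firedBefore m) : σ.occurs t :=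
  let ⟨k, hk, hkt⟩ := ht
  ⟨k, (Nat.cast_lt.mpr hk).trans_le hm, hkt⟩

lemma occurs_iff_mem_firedBefore {n : ℕ} (hn : σ.len = n) {t : T} :
    σ.occurs t ↔ t ∈ σ.firedBefore n := by
  simp [occurs, firedBefore, hn]

lemma exists_firedBefore_of_finite {S : Set T} (hS : S.Finite) (hocc : ∀ t ∈ S, σ.occurs t) :
    ∃ m : ℕ, (m : ℕ∞) ≤ σ.len ∧ S ⊆ σ.firedBefore m := by
  induction S, hS using Set.Finite.induction_on with
  | empty => exact ⟨0, zero_le, Set.empty_subset _⟩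
  | @insert t S _ _ ih =>
    obtain ⟨m, hm, hS⟩ := ih fun u hu => hocc u (Set.mem_insert_of_mem t hu)
    obtain ⟨k, hk, rfl⟩ := hocc _ (Set.mem_insert _ S)
    refine ⟨max m (k + 1), ?_, Set.insert_subset ⟨k, by omega, rfl⟩
      (hS.trans (σ.firedBefore_mono (le_max_left _ _)))⟩
    exact max_le hm (Order.add_one_le_of_lt hk)

end Fired

section OccurrenceNet

variable {C E : Type*} {O : PetriNet C E} (σ : O.Run)

theorem marks_eq_and_isConfiguration (hO : O.IsOccurrenceNet) {m : ℕ} (hm : (m : ℕ∞) ≤ σ.len) :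
    (∀ c, σ.marks m c = if c ∈ O.Cut (σ.firedBefore m) then 1 else 0) ∧
      O.IsConfiguration (σ.firedBefore m) := by
  induction m with
  | zero =>
    refine ⟨fun c => ?_, ?_⟩
    · rw [σ.init, firedBefore_zero, hO.init_minimal]
      simp [Cut, one_le_M0_iff hO]
    · simp [firedBefore_zero, IsConfiguration]
  | succ m ih =>
    have hlt : (m : ℕ∞) < σ.len := (Nat.cast_lt.mpr m.lt_succ_self).trans_le hm
    obtain ⟨hmarks, hconf⟩ := ih hlt.le
    have hen : O.CutEnabled (σ.firedBefore m) (σ.seq m) := fun c hc => by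
      have := σ.enabled_step m hlt c hc
      rw [hmarks] at this
      split_ifs at this with h
      exacts [h, absurd this (by norm_num)]
    rw [firedBefore_succ]
    refine ⟨fun c => ?_, hconf.insert hO hen⟩
    rw [σ.fire_step m hlt, indicator_cut_insert hO hconf hen, fire, hmarks]

lemma enabled_marks_iff (hO : O.IsOccurrenceNet) {m : ℕ} (hm : (m : ℕ∞) ≤ σ.len) {e : E} :
    O.enabled (σ.marks m) e ↔ O.CutEnabled (σ.firedBefore m) e := by
  simp only [enabled, CutEnabled, (σ.marks_eq_and_isConfiguration hO hm).1]
  refine forall_congr' fun c => imp_congr_right fun _ => ?_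
  split_ifs with h <;> simp [h]

theorem isConfiguration_occurs (hO : O.IsOccurrenceNet) : O.IsConfiguration {e | σ.occurs e} := by
  refine ⟨fun e he e' he'e => ?_, fun e he e' he' => ?_⟩
  · obtain ⟨m, hm, hsub⟩ := σ.exists_firedBefore_of_finite (Set.finite_singleton e) (by simpa)
    exact σ.occurs_of_mem_firedBefore hm
      ((σ.marks_eq_and_isConfiguration hO hm).2.1 e (hsub rfl) e' he'e)
  · obtain ⟨m, hm, hsub⟩ :=
      σ.exists_firedBefore_of_finite (Set.toFinite {e, e'})
      (by rintro t (rfl | rfl); exacts [he, he'])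
    exact (σ.marks_eq_and_isConfiguration hO hm).2.2 e (hsub (by simp)) e' (hsub (by simp))

theorem fair_iff (hO : O.IsOccurrenceNet) :
    σ.Fair ↔ ∀ e, ¬ O.CutEnabled {e | σ.occurs e} e := by
  constructor
  · intro hfair e he
    obtain ⟨i, hi, hpast⟩ := σ.exists_firedBefore_of_finite (S := {f | σ.occurs f ∧ O.elt f e})
      ((hO.finite_cones e).subset fun f hf => Or.inr hf.2) fun f hf => hf.1
    have hen : ∀ k, i ≤ k → (k : ℕ∞) ≤ σ.len → O.enabled (σ.marks k) e := fun k hik hk =>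
      (σ.enabled_marks_iff hO hk).mpr <| he.of_subset (fun f hf => σ.occurs_of_mem_firedBefore hk hf)
        fun f hf hfe => σ.firedBefore_mono hik (hpast ⟨hf, hfe⟩)
    rcases hfair with ⟨n, hn, hdead⟩ | ⟨htop, hstarved⟩
    · exact hdead e (hen n (by rw [hn] at hi; exact_mod_cast hi) hn.ge)
    · exact hstarved ⟨e, i, fun k hk => hen k hk (htop ▸ le_top),
        fun k _ hk => he.not_mem hO ⟨k, htop ▸ WithTop.coe_lt_top k, hk⟩⟩
  · intro hdead
    rcases eq_or_ne σ.len ⊤ with htop | hfin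
    · refine .inr ⟨htop, fun ⟨t, i, hen, _⟩ => hdead t fun c hc => ?_⟩
      have hcut : ∀ k, i ≤ k → c ∈ O.Cut (σ.firedBefore k) := fun k hk =>
        (σ.enabled_marks_iff hO (htop ▸ le_top)).mp (hen k hk) c hc
      refine ⟨(hcut i le_rfl).1.imp_right fun ⟨f, hf, hfc⟩ =>
        ⟨f, σ.occurs_of_mem_firedBefore (htop ▸ le_top) hf, hfc⟩, ?_⟩
      rintro ⟨g, ⟨k, -, rfl⟩, hgc⟩
      exact (hcut (max i (k + 1)) (le_max_left _ _)).2 ⟨σ.seq k, ⟨k, by omega, rfl⟩, hgc⟩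
    · obtain ⟨n, hn⟩ := ENat.ne_top_iff_exists.mp hfin
      have h𝒞 : {e | σ.occurs e} = σ.firedBefore n :=
        Set.ext fun _ => σ.occurs_iff_mem_firedBefore hn.symm
      exact .inl ⟨n, hn.symm, fun t ht =>
        hdead t (h𝒞 ▸ (σ.enabled_marks_iff hO hn.le).mp ht)⟩

end OccurrenceNet

end Run

end PetriNet

/-- Let `O` be an occurrence net, `σ` a run of `O` (viewed as a safe
Petri net with initial marking `C0`), and `𝒞` the set of events occurring in `σ`.  Then
`𝒞` is a configuration of `O`, and `σ` is fair if and only if `𝒞` is a maximal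
configuration of `O`. -/
theorem stmt18 {C E : Type} (O : PetriNet C E) (hO : O.IsOccurrenceNet) (σ : O.Run) :
    O.IsConfiguration {e | σ.occurs e} ∧
      (σ.Fair ↔ O.MaximalConfiguration {e | σ.occurs e}) := by
  have h𝒞 := σ.isConfiguration_occurs hO
  exact ⟨h𝒞, (σ.fair_iff hO).trans (PetriNet.maximalConfiguration_iff hO h𝒞).symm⟩
end
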